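/- Let p ≥ 1 be an integer and u > arccosh(3/2). Then u² + 4π²p² − 2pu(u − φ(u)) > 0, where φ(u) = arccosh(cosh u − 1/2). -/

import Mathlib

noncomputable def arcosh (x : ℝ) : ℝ := Real.log (x + Real.sqrt (x ^ 2 - 1))

noncomputable def kappa : ℝ := arcosh (3 / 2)

noncomputable def phi (u : ℝ) : ℝ := arcosh (Real.cosh u - 1 / 2)

/-!
Write `d = u - φ(u)`. The expression is the quadratic form `(u - p d)² + p² (4π² - d²)`, which
is positive definite as soon as `d² < 4π²`. Since `u > κ > 0`, we have `φ(u) < u`, and the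
strict monotonicity of `t ↦ cosh t - cosh (t - κ)` gives `cosh (u - κ) < cosh u - 1/2`, i.e.
`u - κ < φ(u)`. Hence `0 < d < κ < 2 < 2π`.
-/

open Real hiding arcosh

lemma sq_add_mul_sq_sub_two_mul_pos {x y c d : ℝ} (hx : x ≠ 0) (hd : d ^ 2 < c) :
    0 < x ^ 2 + c * y ^ 2 - 2 * y * x * d := by
  have hsos : x ^ 2 + c * y ^ 2 - 2 * y * x * d = (x - y * d) ^ 2 + y ^ 2 * (c - d ^ 2) := by
    ring
  rcases eq_or_ne y 0 with rfl | hy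
  · simpa using pow_pos (abs_pos.mpr hx) 2
  · have : 0 < c - d ^ 2 := sub_pos.mpr hd
    rw [hsos]
    positivity

lemma strictMono_cosh_sub_cosh_sub {a : ℝ} (ha : 0 < a) :
    StrictMono fun t => cosh t - cosh (t - a) := by
  refine strictMono_of_deriv_pos fun t => ?_
  have hderiv : HasDerivAt (fun t => cosh t - cosh (t - a)) (sinh t - sinh (t - a) * 1) t :=
    (hasDerivAt_cosh t).sub ((hasDerivAt_id t).sub_const a).cosh
  rw [hderiv.deriv, mul_one, sub_pos]
  exact sinh_lt_sinh.mpr (sub_lt_self t ha)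

lemma cosh_kappa : cosh kappa = 3 / 2 := cosh_arcosh (by norm_num)

lemma kappa_pos : 0 < kappa := arcosh_pos (by norm_num)

lemma kappa_lt_two : kappa < 2 := by
  have h : 3 / 2 < cosh 2 := by
    rw [cosh_eq]
    linarith [add_one_le_exp 2, exp_pos (-2)]
  calc kappa = Real.arcosh (3 / 2) := rfl
    _ < Real.arcosh (cosh 2) := (arcosh_lt_arcosh (by norm_num) (cosh_pos 2)).mpr h
    _ = 2 := arcosh_cosh zero_le_two

lemma phi_lt_self {u : ℝ} (hu : 0 ≤ u) : phi u < u :=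
  calc phi u = Real.arcosh (cosh u - 1 / 2) := rfl
    _ < Real.arcosh (cosh u) :=
      (arcosh_lt_arcosh (by linarith [one_le_cosh u]) (cosh_pos u)).mpr (by linarith)
    _ = u := arcosh_cosh hu

lemma sub_kappa_lt_phi {u : ℝ} (hu : kappa < u) : u - kappa < phi u := by
  have hgap : cosh (u - kappa) < cosh u - 1 / 2 := by
    have := strictMono_cosh_sub_cosh_sub kappa_pos hu
    simp only [sub_self, cosh_zero, cosh_kappa] at this
    linarith
  calc u - kappa = Real.arcosh (cosh (u - kappa)) := (arcosh_cosh (by linarith)).symm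
    _ < Real.arcosh (cosh u - 1 / 2) :=
      (arcosh_lt_arcosh (cosh_pos _) (by linarith [one_le_cosh u])).mpr hgap
    _ = phi u := rfl

theorem quad_pos_general (p : ℕ) (u : ℝ) (hu : kappa < u) :
    0 < u ^ 2 + 4 * Real.pi ^ 2 * p ^ 2 - 2 * p * u * (u - phi u) := by
  have hu0 : 0 < u := kappa_pos.trans hu
  have hd : (u - phi u) ^ 2 < 4 * π ^ 2 := by
    have hd0 : 0 < u - phi u := sub_pos.mpr (phi_lt_self hu0.le)
    have hd2 : u - phi u < 2 := by linarith [sub_kappa_lt_phi hu, kappa_lt_two]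
    nlinarith [pi_gt_three]
  exact sq_add_mul_sq_sub_two_mul_pos hu0.ne' hd

theorem quad_pos (p : ℕ) (hp : 1 ≤ p) (u : ℝ) (hu : kappa < u) :
    0 < u ^ 2 + 4 * Real.pi ^ 2 * p ^ 2 - 2 * p * u * (u - phi u) :=
  quad_pos_general p u hu
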